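/- arXiv:1910.02508 — 3 statements merged into one kernel-verified Lean document; each statement's English description precedes it below -/
import Mathlib

section
/- Let (X, W) be a metric space, ℰ : X → (-∞, +∞] lower semicontinuous, and for x₀ ∈ X and t > 0 let x_t be a minimizer of x ↦ (1/(2t)) W(x, x₀)² + ℰ(x). Define f(t) to be this minimal value. Then for 0 < s < t, f(t) - f(s) ≤ ((s - t)/(2st)) W(x_s, x₀)²; consequently f is locally Lipschitz on any interval where minimizers exist, with f'(t) = -(1/(2t²)) W(x_t, x₀)² for almost every t. -/
/-!
Write `g = W(·, x₀)²`. Using the minimizer `x_s` as a competitor at time `t` gives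
`f(t) - f(s) ≤ (1/(2t) - 1/(2s)) g(x_s)`, and exchanging `s` and `t` bounds `f(t) - f(s)` from
below by the same coefficient times `g(x_t)`. Adding the two bounds shows that `t ↦ g(x_t)` is
nondecreasing: it is therefore bounded on compact subintervals of `(0, ∞)`, which makes `f`
locally Lipschitz, and continuous off a countable set, where the difference quotients of `f` are
squeezed to `-g(x_t)/(2t²)`.
-/

open MeasureTheory Filter Set Topology

theorem abs_one_div_two_mul_sub_le {a u v : ℝ} (ha : 0 < a) (hu : a ≤ u) (hv : a ≤ v) :
    |1 / (2 * u) - 1 / (2 * v)| ≤ |u - v| / (2 * a ^ 2) := by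
  have hu' : 0 < u := ha.trans_le hu
  have hv' : 0 < v := ha.trans_le hv
  rw [show 1 / (2 * u) - 1 / (2 * v) = (v - u) / (2 * u * v) by field_simp, abs_div,
    abs_of_pos (by positivity : 0 < 2 * u * v), abs_sub_comm]
  exact div_le_div_of_nonneg_left (abs_nonneg _) (by positivity) (by nlinarith)

theorem div_mem_uIcc_of_mul_le_of_le_mul {c p q r : ℝ} (hc : c ≠ 0) (hp : c * p ≤ r)
    (hq : r ≤ c * q) : r / c ∈ uIcc p q := by
  rcases hc.lt_or_gt with hc | hc
  · exact mem_uIcc.2 (Or.inr ⟨(le_div_iff_of_neg hc).2 (by linarith),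
      (div_le_iff_of_neg hc).2 (by linarith)⟩)
  · exact mem_uIcc.2 (Or.inl ⟨(le_div_iff₀ hc).2 (by linarith),
      (div_le_iff₀ hc).2 (by linarith)⟩)

namespace DeGiorgi

variable {X : Type*} (g E : X → ℝ) (x : ℝ → X)

noncomputable def value (t : ℝ) : ℝ := 1 / (2 * t) * g (x t) + E (x t)

def IsMinimizing : Prop :=
  ∀ t > (0 : ℝ), ∀ y, 1 / (2 * t) * g (x t) + E (x t) ≤ 1 / (2 * t) * g y + E y

variable {g E x}

namespace IsMinimizing

theorem value_sub_le (hx : IsMinimizing g E x) {t : ℝ} (ht : 0 < t) (s : ℝ) :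
    value g E x t - value g E x s ≤ (1 / (2 * t) - 1 / (2 * s)) * g (x s) := by
  have := hx t ht (x s)
  unfold value
  linarith

theorem monotoneOn (hx : IsMinimizing g E x) : MonotoneOn (g ∘ x) (Ioi 0) := by
  intro s (hs : 0 < s) t (ht : 0 < t) hst
  rcases hst.eq_or_lt with rfl | hst
  · rfl
  have hcoef : 0 < 1 / (2 * s) - 1 / (2 * t) := by
    rw [sub_pos]; gcongr
  have hsum : 0 ≤ (1 / (2 * s) - 1 / (2 * t)) * (g (x t) - g (x s)) := by
    linarith [hx.value_sub_le hs t, hx.value_sub_le ht s]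
  exact sub_nonneg.1 (nonneg_of_mul_nonneg_right hsum hcoef)

theorem lipschitzOnWith_value (hx : IsMinimizing g E x) (hg : ∀ y, 0 ≤ g y) {a : ℝ}
    (ha : 0 < a) (b : ℝ) : ∃ K, LipschitzOnWith K (value g E x) (Icc a b) := by
  refine ⟨_, LipschitzOnWith.of_le_add_mul' (g (x b) / (2 * a ^ 2)) fun u hu v hv => ?_⟩
  have hgv : g (x v) ≤ g (x b) :=
    hx.monotoneOn (ha.trans_le hv.1) (ha.trans_le (hv.1.trans hv.2)) hv.2
  calc value g E x u
      ≤ value g E x v + (1 / (2 * u) - 1 / (2 * v)) * g (x v) := by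
        linarith [hx.value_sub_le (ha.trans_le hu.1) v]
    _ ≤ value g E x v + |1 / (2 * u) - 1 / (2 * v)| * g (x b) := by
        gcongr
        · exact hg _
        · exact le_abs_self _
    _ ≤ value g E x v + |u - v| / (2 * a ^ 2) * g (x b) := by
        gcongr
        · exact (hg _).trans hgv
        · exact abs_one_div_two_mul_sub_le ha hu.1 hv.1
    _ = value g E x v + g (x b) / (2 * a ^ 2) * dist u v := by
        rw [Real.dist_eq]; ring

theorem hasDerivAt_value (hx : IsMinimizing g E x) {t : ℝ} (ht : 0 < t)
    (hc : ContinuousAt (g ∘ x) t) :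
    HasDerivAt (value g E x) (-(1 / (2 * t ^ 2)) * g (x t)) t := by
  -- `q` is the difference quotient of the value with respect to `1 / (2 * t)`.
  set q : ℝ → ℝ := fun s => (value g E x s - value g E x t) / (1 / (2 * s) - 1 / (2 * t))
  have hnear : ∀ᶠ s in 𝓝[≠] t, 0 < s ∧ s ≠ t := by
    filter_upwards [nhdsWithin_le_nhds (Ioi_mem_nhds ht), self_mem_nhdsWithin] with s hs hst
    exact ⟨hs, hst⟩
  have hq_mem : ∀ᶠ s in 𝓝[≠] t, q s ∈ uIcc (g (x s)) (g (x t)) := by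
    filter_upwards [hnear] with s ⟨hs, hst⟩
    refine div_mem_uIcc_of_mul_le_of_le_mul ?_ ?_ (hx.value_sub_le hs t)
    · rw [sub_ne_zero]
      exact fun h => hst (by simpa using h)
    · linarith [hx.value_sub_le ht s]
  have hgx : Tendsto (g ∘ x) (𝓝[≠] t) (𝓝 (g (x t))) := hc.tendsto.mono_left nhdsWithin_le_nhds
  have hlow := hgx.min (tendsto_const_nhds (x := g (x t)))
  have hupp := hgx.max (tendsto_const_nhds (x := g (x t)))
  rw [min_self] at hlow
  rw [max_self] at hupp
  have hq : Tendsto q (𝓝[≠] t) (𝓝 (g (x t))) :=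
    tendsto_of_tendsto_of_tendsto_of_le_of_le' hlow hupp (hq_mem.mono fun _ h => h.1)
      (hq_mem.mono fun _ h => h.2)
  have hcoef : Tendsto (fun s => -(1 / (2 * s * t))) (𝓝[≠] t) (𝓝 (-(1 / (2 * t ^ 2)))) := by
    rw [sq, ← mul_assoc]
    exact (continuousAt_const.div (by fun_prop) (by positivity)).neg.tendsto.mono_left
      nhdsWithin_le_nhds
  rw [hasDerivAt_iff_tendsto_slope]
  refine (hcoef.mul hq).congr' ?_
  filter_upwards [hnear] with s ⟨hs, hst⟩
  have : s - t ≠ 0 := sub_ne_zero.2 hst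
  simp only [q, slope_def_field]
  field_simp
  ring

theorem ae_hasDerivAt_value (hx : IsMinimizing g E x) :
    ∀ᵐ t ∂volume.restrict (Ioi 0), HasDerivAt (value g E x) (-(1 / (2 * t ^ 2)) * g (x t)) t := by
  rw [ae_restrict_iff' measurableSet_Ioi]
  filter_upwards [hx.monotoneOn.countable_not_continuousWithinAt.ae_notMem volume]
    with t hjump ht
  have hc : ContinuousWithinAt (g ∘ x) (Ioi 0) t := by_contra fun h => hjump ⟨ht, h⟩
  exact hx.hasDerivAt_value ht (hc.continuousAt (Ioi_mem_nhds ht))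

end IsMinimizing

end DeGiorgi

/-- monotonicity of the minimal value of De Giorgi's variational
interpolation: `f(t) - f(s) ≤ ((s-t)/(2st)) W(x_s, x₀)²` for `0 < s < t`; hence `f`
is locally Lipschitz on `(0, ∞)` and `f'(t) = -(1/(2t²)) W(x_t, x₀)²` a.e. -/
theorem de_giorgi_value_monotonicity {X : Type*} [MetricSpace X]
    (ℰ : X → ℝ) (x₀ : X) (xsel : ℝ → X)
    (hmin : ∀ t > (0:ℝ), ∀ y : X,
      (1 / (2 * t)) * (dist (xsel t) x₀) ^ 2 + ℰ (xsel t)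
        ≤ (1 / (2 * t)) * (dist y x₀) ^ 2 + ℰ y) :
    (∀ s t : ℝ, 0 < s → s < t →
      ((1 / (2 * t)) * (dist (xsel t) x₀) ^ 2 + ℰ (xsel t))
          - ((1 / (2 * s)) * (dist (xsel s) x₀) ^ 2 + ℰ (xsel s))
        ≤ ((s - t) / (2 * s * t)) * (dist (xsel s) x₀) ^ 2)
    ∧ (∀ a b : ℝ, 0 < a → a < b → ∃ K : NNReal,
        LipschitzOnWith K
          (fun t => (1 / (2 * t)) * (dist (xsel t) x₀) ^ 2 + ℰ (xsel t))
          (Set.Icc a b))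
    ∧ (∀ᵐ t ∂(volume.restrict (Set.Ioi (0:ℝ))),
        HasDerivAt (fun τ => (1 / (2 * τ)) * (dist (xsel τ) x₀) ^ 2 + ℰ (xsel τ))
          (-(1 / (2 * t ^ 2)) * (dist (xsel t) x₀) ^ 2) t) := by
  have hx : DeGiorgi.IsMinimizing (fun y => dist y x₀ ^ 2) ℰ xsel := hmin
  refine ⟨fun s t hs hst => ?_,
    fun a b ha _ => hx.lipschitzOnWith_value (fun _ => sq_nonneg _) ha b,
    hx.ae_hasDerivAt_value⟩
  have ht : 0 < t := hs.trans hst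
  rw [show (s - t) / (2 * s * t) = 1 / (2 * t) - 1 / (2 * s) by field_simp]
  exact hx.value_sub_le ht s
end

section
/- Let ℰ be lower semicontinuous on a metric space (X, W), let x₀ ∈ X with ℰ(x₀) < ∞, and for t ∈ (0, h] let x̃(t) minimize x ↦ (1/(2t)) W(x, x₀)² + ℰ(x), with x₁ := x̃(h). Assume x̃(t) → x₀ with respect to W as t ↓ 0. Then (h/2)(W(x₁, x₀)/h)² + (1/2) ∫₀ʰ (W(x̃(t), x₀)/t)² dt ≤ ℰ(x₀) - ℰ(x₁). -/
/-!
Write `v(t) = min_y Φ(t, y)` for `Φ(t, y) = d(y, x₀)²/(2t) + ℰ(y)` and `D(t) = d(x̃(t), x₀)²`.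
Comparing `x̃(s)` with the minimiser at time `t` and vice versa gives, for `0 < s, t ≤ h`,
`D(s) (1/s - 1/t) ≤ 2 v(s) - 2 v(t) ≤ D(t) (1/s - 1/t)`.
Hence `D` is nondecreasing, `v` is nonincreasing, and at every continuity point of `D` (all but
countably many) `-2v` is differentiable with derivative `D(t)/t²`. Testing `Φ(t, ·)` with `x₀`
gives `v(t) ≤ ℰ(x₀)`, so `-2v`, extended by `-2ℰ(x₀)` at `0`, is monotone on `[0, h]`; the integral
of the a.e. derivative of a monotone function is at most its increment, which is the claim.
-/

open MeasureTheory Set Filter Topology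

theorem slope_mem_Icc_of_sub_mem_Icc {f D φ : ℝ → ℝ} {a b : ℝ} (hab : a < b)
    (hinc : f b - f a ∈ Icc (D a * (φ b - φ a)) (D b * (φ b - φ a))) :
    slope f a b ∈ Icc (D a * slope φ a b) (D b * slope φ a b) := by
  have hba : 0 < b - a := sub_pos.2 hab
  simp only [slope_def_field, ← mul_div_assoc]
  exact ⟨div_le_div_of_nonneg_right hinc.1 hba.le, div_le_div_of_nonneg_right hinc.2 hba.le⟩

theorem hasDerivAt_of_sub_mem_Icc {f D φ : ℝ → ℝ} {x φ' : ℝ} {U : Set ℝ} (hU : U ∈ 𝓝 x)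
    (hinc : ∀ a ∈ U, ∀ b ∈ U, a ≤ b →
      f b - f a ∈ Icc (D a * (φ b - φ a)) (D b * (φ b - φ a)))
    (hD : ContinuousAt D x) (hφ : HasDerivAt φ φ' x) :
    HasDerivAt f (D x * φ') x := by
  rw [hasDerivAt_iff_tendsto_slope] at hφ ⊢
  have hDx : Tendsto D (𝓝[≠] x) (𝓝 (D x)) := hD.tendsto.mono_left nhdsWithin_le_nhds
  have hlow := ((tendsto_const_nhds (x := D x)).mul hφ).min (hDx.mul hφ)
  have hup := ((tendsto_const_nhds (x := D x)).mul hφ).max (hDx.mul hφ)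
  rw [min_self] at hlow
  rw [max_self] at hup
  have hbetween : ∀ᶠ t in 𝓝[≠] x,
      min (D x * slope φ x t) (D t * slope φ x t) ≤ slope f x t ∧
        slope f x t ≤ max (D x * slope φ x t) (D t * slope φ x t) := by
    filter_upwards [mem_nhdsWithin_of_mem_nhds hU, self_mem_nhdsWithin] with t htU htx
    rcases lt_or_gt_of_ne htx with htx | hxt
    · obtain ⟨h₁, h₂⟩ :=
        slope_mem_Icc_of_sub_mem_Icc htx (hinc t htU x (mem_of_mem_nhds hU) htx.le)
      rw [slope_comm f, slope_comm φ]
      exact ⟨min_le_of_right_le h₁, le_max_of_le_left h₂⟩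
    · obtain ⟨h₁, h₂⟩ :=
        slope_mem_Icc_of_sub_mem_Icc hxt (hinc x (mem_of_mem_nhds hU) t htU hxt.le)
      exact ⟨min_le_of_left_le h₁, le_max_of_le_right h₂⟩
  exact tendsto_of_tendsto_of_tendsto_of_le_of_le' hlow hup
    (hbetween.mono fun _ h => h.1) (hbetween.mono fun _ h => h.2)

theorem MonotoneOn.update_left_Icc {f : ℝ → ℝ} {a b c : ℝ} (hf : MonotoneOn f (Ioc a b))
    (hc : ∀ x ∈ Ioc a b, c ≤ f x) : MonotoneOn (Function.update f a c) (Icc a b) := by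
  intro x hx y hy hxy
  rcases eq_or_lt_of_le hx.1 with rfl | hax
  · rcases eq_or_lt_of_le hy.1 with rfl | hay
    · exact le_rfl
    · rw [Function.update_self, Function.update_of_ne hay.ne']
      exact hc y ⟨hay, hy.2⟩
  · have hay := hax.trans_le hxy
    rw [Function.update_of_ne hax.ne', Function.update_of_ne hay.ne']
    exact hf ⟨hax, hx.2⟩ ⟨hay, hy.2⟩ hxy

theorem integral_mul_deriv_le_of_sub_mem_Icc {f D φ φ' : ℝ → ℝ} {a b c : ℝ} (hab : a < b)
    (hf : MonotoneOn f (Ioc a b)) (hc : ∀ x ∈ Ioc a b, c ≤ f x) (hD : MonotoneOn D (Ioo a b))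
    (hφ : ∀ x ∈ Ioo a b, HasDerivAt φ (φ' x) x)
    (hinc : ∀ x ∈ Ioo a b, ∀ y ∈ Ioo a b, x ≤ y →
      f y - f x ∈ Icc (D x * (φ y - φ x)) (D y * (φ y - φ x))) :
    ∫ x in a..b, D x * φ' x ≤ f b - c := by
  set F := Function.update f a c
  have hFa : F a = c := Function.update_self a c f
  have hFf : ∀ y, a < y → F y = f y := fun y hy => Function.update_of_ne hy.ne' c f
  have hF : MonotoneOn F (uIcc a b) := uIcc_of_le hab.le ▸ hf.update_left_Icc hc
  have hderiv : ∀ x ∈ Ioo a b, ContinuousAt D x → deriv F x = D x * φ' x := by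
    intro x hx hDx
    have hFx : F =ᶠ[𝓝 x] f := eventually_of_mem (Ioi_mem_nhds hx.1) hFf
    exact ((hasDerivAt_of_sub_mem_Icc (Ioo_mem_nhds hx.1 hx.2) hinc hDx
      (hφ x hx)).congr_of_eventuallyEq hFx).deriv
  have hae : ∀ᵐ x, x ∈ uIoc a b → D x * φ' x = deriv F x := by
    filter_upwards [hD.countable_not_continuousWithinAt.ae_notMem volume,
      measure_singleton b |> measure_eq_zero_iff_ae_notMem.1] with x hxD hxb hx
    rw [uIoc_of_le hab.le] at hx
    have hxo : x ∈ Ioo a b := ⟨hx.1, lt_of_le_of_ne hx.2 hxb⟩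
    have hcont : ContinuousAt D x :=
      (not_not.1 fun h => hxD ⟨hxo, h⟩).continuousAt (Ioo_mem_nhds hxo.1 hxo.2)
    exact (hderiv x hxo hcont).symm
  calc ∫ x in a..b, D x * φ' x = ∫ x in a..b, deriv F x := intervalIntegral.integral_congr_ae hae
    _ ≤ F b - F a := hF.intervalIntegral_deriv_mem_uIcc.2.trans_eq
        (max_eq_right (sub_nonneg.2 (hF left_mem_uIcc right_mem_uIcc hab.le)))
    _ = f b - c := by rw [hFa, hFf b hab]

section MoreauYosida

variable {X : Type*} [PseudoMetricSpace X]

noncomputable def moreauYosidaFunctional (ℰ : X → ℝ) (x₀ : X) (t : ℝ) (y : X) : ℝ :=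
  1 / (2 * t) * dist y x₀ ^ 2 + ℰ y

def IsMoreauYosidaSelection (ℰ : X → ℝ) (x₀ : X) (h : ℝ) (xt : ℝ → X) : Prop :=
  ∀ t : ℝ, 0 < t → t ≤ h → ∀ y : X,
    moreauYosidaFunctional ℰ x₀ t (xt t) ≤ moreauYosidaFunctional ℰ x₀ t y

variable {ℰ : X → ℝ} {x₀ : X}

theorem two_mul_moreauYosidaFunctional_sub (s t : ℝ) (y : X) :
    2 * moreauYosidaFunctional ℰ x₀ s y - 2 * moreauYosidaFunctional ℰ x₀ t y
      = dist y x₀ ^ 2 * (s⁻¹ - t⁻¹) := by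
  unfold moreauYosidaFunctional
  ring

@[simp]
theorem moreauYosidaFunctional_basepoint (t : ℝ) : moreauYosidaFunctional ℰ x₀ t x₀ = ℰ x₀ := by
  simp [moreauYosidaFunctional]

namespace IsMoreauYosidaSelection

variable {h : ℝ} {xt : ℝ → X} (hsel : IsMoreauYosidaSelection ℰ x₀ h xt)
include hsel

theorem two_mul_value_sub_mem_Icc {s t : ℝ} (hs : 0 < s) (hsh : s ≤ h) (ht : 0 < t)
    (hth : t ≤ h) :
    2 * moreauYosidaFunctional ℰ x₀ s (xt s) - 2 * moreauYosidaFunctional ℰ x₀ t (xt t)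
      ∈ Icc (dist (xt s) x₀ ^ 2 * (s⁻¹ - t⁻¹)) (dist (xt t) x₀ ^ 2 * (s⁻¹ - t⁻¹)) := by
  rw [← two_mul_moreauYosidaFunctional_sub, ← two_mul_moreauYosidaFunctional_sub]
  exact ⟨by linarith [hsel t ht hth (xt s)], by linarith [hsel s hs hsh (xt t)]⟩

theorem monotoneOn_dist_sq : MonotoneOn (fun t => dist (xt t) x₀ ^ 2) (Ioc 0 h) := by
  intro s hs t ht hst
  rcases eq_or_lt_of_le hst with rfl | hst
  · exact le_rfl
  have hpos : 0 < s⁻¹ - t⁻¹ := sub_pos.2 (inv_strictAntiOn hs.1 ht.1 hst)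
  have hinc := hsel.two_mul_value_sub_mem_Icc hs.1 hs.2 ht.1 ht.2
  exact le_of_mul_le_mul_right (hinc.1.trans hinc.2) hpos

theorem antitoneOn_value :
    AntitoneOn (fun t => moreauYosidaFunctional ℰ x₀ t (xt t)) (Ioc 0 h) := by
  intro s hs t ht hst
  have hnonneg : 0 ≤ dist (xt s) x₀ ^ 2 * (s⁻¹ - t⁻¹) :=
    mul_nonneg (sq_nonneg _) (sub_nonneg.2 (inv_anti₀ hs.1 hst))
  linarith [(hsel.two_mul_value_sub_mem_Icc hs.1 hs.2 ht.1 ht.2).1]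

theorem value_le {t : ℝ} (ht : 0 < t) (hth : t ≤ h) :
    moreauYosidaFunctional ℰ x₀ t (xt t) ≤ ℰ x₀ :=
  (hsel t ht hth x₀).trans_eq (moreauYosidaFunctional_basepoint t)

end IsMoreauYosidaSelection

end MoreauYosida

theorem de_giorgi_one_step_dissipation_general {X : Type*} [MetricSpace X]
    (ℰ : X → ℝ)
    (x₀ : X) (h : ℝ) (hh : 0 < h) (xt : ℝ → X)
    (hmin : ∀ t : ℝ, 0 < t → t ≤ h → ∀ y : X,
      (1 / (2 * t)) * (dist (xt t) x₀) ^ 2 + ℰ (xt t)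
        ≤ (1 / (2 * t)) * (dist y x₀) ^ 2 + ℰ y) :
    (h / 2) * (dist (xt h) x₀ / h) ^ 2
        + (1 / 2) * ∫ t in Set.Ioc (0:ℝ) h, (dist (xt t) x₀ / t) ^ 2
      ≤ ℰ x₀ - ℰ (xt h) := by
  have hsel : IsMoreauYosidaSelection ℰ x₀ h xt := hmin
  have hdiss := integral_mul_deriv_le_of_sub_mem_Icc
    (f := fun t => -(2 * moreauYosidaFunctional ℰ x₀ t (xt t)))
    (D := fun t => dist (xt t) x₀ ^ 2) (φ := fun t => -t⁻¹) (φ' := fun t => (t ^ 2)⁻¹)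
    (c := -(2 * ℰ x₀)) hh
    (fun s hs t ht hst => by simpa using hsel.antitoneOn_value hs ht hst)
    (fun t ht => by simpa using hsel.value_le ht.1 ht.2)
    (hsel.monotoneOn_dist_sq.mono Ioo_subset_Ioc_self)
    (fun t ht => by simpa using (hasDerivAt_inv ht.1.ne').fun_neg)
    (fun s hs t ht _ => by
      simpa only [neg_sub_neg] using hsel.two_mul_value_sub_mem_Icc hs.1 hs.2.le ht.1 ht.2.le)
  have hint : ∫ t in Ioc (0:ℝ) h, (dist (xt t) x₀ / t) ^ 2
      = ∫ t in (0:ℝ)..h, dist (xt t) x₀ ^ 2 * (t ^ 2)⁻¹ := by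
    rw [intervalIntegral.integral_of_le hh.le]
    simp_rw [div_pow, div_eq_mul_inv]
  have hend : (h / 2) * (dist (xt h) x₀ / h) ^ 2 = 1 / (2 * h) * dist (xt h) x₀ ^ 2 := by
    field_simp
  rw [hint, hend]
  unfold moreauYosidaFunctional at hdiss
  linarith

/-- one-step sharp energy-dissipation inequality for De Giorgi's
variational interpolation (cf. AGS, Theorem 3.1.4):
`(h/2)(W(x₁,x₀)/h)² + (1/2)∫₀ʰ (W(x̃(t),x₀)/t)² dt ≤ ℰ(x₀) - ℰ(x₁)`. -/
theorem de_giorgi_one_step_dissipation {X : Type*} [MetricSpace X]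
    (ℰ : X → ℝ) (hlsc : LowerSemicontinuous ℰ)
    (x₀ : X) (h : ℝ) (hh : 0 < h) (xt : ℝ → X)
    (hmin : ∀ t : ℝ, 0 < t → t ≤ h → ∀ y : X,
      (1 / (2 * t)) * (dist (xt t) x₀) ^ 2 + ℰ (xt t)
        ≤ (1 / (2 * t)) * (dist y x₀) ^ 2 + ℰ y)
    (hcont : Filter.Tendsto xt (nhdsWithin 0 (Set.Ioi 0)) (nhds x₀)) :
    (h / 2) * (dist (xt h) x₀ / h) ^ 2
        + (1 / 2) * ∫ t in Set.Ioc (0:ℝ) h, (dist (xt t) x₀ / t) ^ 2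
      ≤ ℰ x₀ - ℰ (xt h) :=
  de_giorgi_one_step_dissipation_general ℰ x₀ h hh xt hmin
end

section
/- Let (X, W) be a metric space and ℰ : X → (-∞, +∞]. Define the local slope |∂ℰ|(x) := limsup_{y → x} (ℰ(x) - ℰ(y))₊ / W(x, y). If x̃ minimizes y ↦ (1/(2t)) W(y, x₀)² + ℰ(y), then |∂ℰ|(x̃) ≤ W(x̃, x₀)/t. -/
/-
The minimality of `x'` against a competitor `y` gives
`ℰ x' - ℰ y ≤ (W(y,x₀)² - W(x',x₀)²) / (2t) ≤ W(x',y) · (W(y,x₀) + W(x',x₀)) / (2t)`,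
the second step being the triangle inequality. Dividing by `W(x',y)` bounds the difference
quotients by a function of `y` that tends to `W(x',x₀)/t` as `y → x'`.
-/

open Filter Topology

theorem Real.limsup_bot {α : Type*} (f : α → ℝ) : limsup f ⊥ = 0 := by
  simp [limsup, limsSup]

theorem Real.limsup_le_of_eventually_le_of_tendsto {α : Type*} {l : Filter α} {f g : α → ℝ}
    {c : ℝ} (hc : 0 ≤ c) (hf : ∀ᶠ a in l, 0 ≤ f a) (hfg : f ≤ᶠ[l] g) (hg : Tendsto g l (𝓝 c)) :
    limsup f l ≤ c := by
  rcases eq_or_neBot l with rfl | _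
  · simpa [Real.limsup_bot] using hc
  · calc limsup f l ≤ limsup g l :=
          limsup_le_limsup hfg (isCoboundedUnder_le_of_eventually_le l hf) hg.isBoundedUnder_le
      _ = c := hg.limsup_eq

theorem sq_dist_sub_sq_dist_le {X : Type*} [PseudoMetricSpace X] (x y z : X) :
    dist y z ^ 2 - dist x z ^ 2 ≤ dist x y * (dist y z + dist x z) := by
  have h : dist y z - dist x z ≤ dist x y := by
    linarith [dist_triangle y x z, dist_comm x y]
  calc dist y z ^ 2 - dist x z ^ 2 = (dist y z - dist x z) * (dist y z + dist x z) := by ring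
    _ ≤ dist x y * (dist y z + dist x z) := by gcongr

section Slope

variable {X : Type*} [MetricSpace X]

/-- At an isolated point `𝓝[≠] x = ⊥`, so the slope is `0` there. -/
noncomputable def localSlope (ℰ : X → ℝ) (x : X) : ℝ :=
  limsup (fun y => max (ℰ x - ℰ y) 0 / dist x y) (𝓝[≠] x)

theorem localSlope_le_of_tendsto {ℰ g : X → ℝ} {x : X} {c : ℝ} (hc : 0 ≤ c)
    (hg : Tendsto g (𝓝[≠] x) (𝓝 c)) (h : ∀ᶠ y in 𝓝[≠] x, ℰ x - ℰ y ≤ dist x y * g y) :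
    localSlope ℰ x ≤ c := by
  have hg' : Tendsto (fun y => max (g y) 0) (𝓝[≠] x) (𝓝 c) := by
    simpa [max_eq_left hc] using hg.max (tendsto_const_nhds (x := (0 : ℝ)))
  refine Real.limsup_le_of_eventually_le_of_tendsto hc
    (Eventually.of_forall fun y => by positivity) ?_ hg'
  filter_upwards [h, self_mem_nhdsWithin] with y hy hne
  have hd : 0 < dist x y := dist_pos.mpr (Ne.symm hne)
  rw [div_le_iff₀ hd, mul_comm]
  exact max_le (hy.trans (mul_le_mul_of_nonneg_left (le_max_left _ _) hd.le)) (by positivity)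

theorem sub_le_dist_mul_of_minimizes {ℰ : X → ℝ} {x₀ x' : X} {t : ℝ} (ht : 0 ≤ t)
    (hmin : ∀ y : X,
      (1 / (2 * t)) * (dist x' x₀) ^ 2 + ℰ x' ≤ (1 / (2 * t)) * (dist y x₀) ^ 2 + ℰ y)
    (y : X) : ℰ x' - ℰ y ≤ dist x' y * ((dist y x₀ + dist x' x₀) / (2 * t)) := by
  calc ℰ x' - ℰ y ≤ (1 / (2 * t)) * (dist y x₀ ^ 2 - dist x' x₀ ^ 2) := by
        linarith [hmin y]
    _ ≤ (1 / (2 * t)) * (dist x' y * (dist y x₀ + dist x' x₀)) := by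
        gcongr; exact sq_dist_sub_sq_dist_le x' y x₀
    _ = dist x' y * ((dist y x₀ + dist x' x₀) / (2 * t)) := by ring

end Slope

/-- slope estimate for the resolvent of the minimizing movements
scheme (cf. AGS, Lemma 3.1.3): if `x̃` minimizes `y ↦ (1/(2t)) W(y,x₀)² + ℰ(y)`,
then the local slope satisfies `|∂ℰ|(x̃) ≤ W(x̃, x₀)/t`. -/
theorem slope_estimate_resolvent {X : Type*} [MetricSpace X]
    (ℰ : X → ℝ) (x₀ x' : X) (t : ℝ) (ht : 0 < t)
    (hmin : ∀ y : X,
      (1 / (2 * t)) * (dist x' x₀) ^ 2 + ℰ x'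
        ≤ (1 / (2 * t)) * (dist y x₀) ^ 2 + ℰ y) :
    limsup (fun y => max (ℰ x' - ℰ y) 0 / dist x' y) (nhdsWithin x' {x'}ᶜ)
      ≤ dist x' x₀ / t := by
  change localSlope ℰ x' ≤ dist x' x₀ / t
  have hlim : Tendsto (fun y => (dist y x₀ + dist x' x₀) / (2 * t)) (𝓝[≠] x')
      (𝓝 (dist x' x₀ / t)) := by
    have hcont : Continuous fun y => (dist y x₀ + dist x' x₀) / (2 * t) := by fun_prop
    convert (hcont.tendsto x').mono_left nhdsWithin_le_nhds using 2
    field_simp; ring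
  exact localSlope_le_of_tendsto (div_nonneg dist_nonneg ht.le) hlim
    (Eventually.of_forall (sub_le_dist_mul_of_minimizes ht.le hmin))
end
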